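/- arXiv:1611.03535 — 2 statements merged into one kernel-verified Lean document; each statement's English description precedes it below -/
import Mathlib

section
/- Fix k ≥ 1. Let d_k : {0,1,2}* → {0,1,2}* be the morphism with d_k(i) = i^{k+1}, let g : {0,1,2}* → {0,1,2,a,b}* be the morphism with g(i) = i·a·b, and for w ∈ {0,1,2}* let u_w be the word over {0,1,2,a,b,c} obtained from g(d_k(w)) by inserting the new letter c after every 3k letters of g(d_k(w)). If w is square-free, then u_w avoids the formula with reversal φ_{3k+1}; consequently, φ_{3k+1} is 6-avoidable for all k ≥ 1. -/
/-- A word `w` *encounters* the formula with reversal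
`φ_k = x y₁ ⋯ y_k x · ȳ₁ · ⋯ · ȳ_k` if there are nonempty words `X, Y₁, …, Y_k`
such that `X Y₁ ⋯ Y_k X` is a factor of `w` and each reversed `Yᵢ` is a factor of `w`. -/
def Encounters {A : Type*} (k : ℕ) (w : List A) : Prop :=
  ∃ (X : List A) (Ys : List (List A)),
    Ys.length = k ∧ X ≠ [] ∧ (∀ Y ∈ Ys, Y ≠ []) ∧
    (X ++ Ys.flatten ++ X) <:+: w ∧ (∀ Y ∈ Ys, Y.reverse <:+: w)

/-- A word avoids the formula with reversal `φ_k`. -/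
def Avoids {A : Type*} (k : ℕ) (w : List A) : Prop := ¬ Encounters k w

/-- A word is square-free if it has no factor `u ++ u` with `u` nonempty. -/
def SquareFree {A : Type*} (w : List A) : Prop :=
  ∀ u : List A, u ≠ [] → ¬ (u ++ u) <:+: w

/-- Auxiliary function building the `m`-cyclic `w`-word starting at block index `i`. -/
def cyclicWordFrom {A : Type*} (m : ℕ) (a : ℕ → A) : ℕ → List ℕ → List A
  | _, [] => []
  | i, x :: xs => List.replicate x (a (i % m)) ++ cyclicWordFrom m a (i + 1) xs

/-- The `m`-cyclic `w`-word `C_m(w)` on letters `a 0, …, a (m-1)`: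
`(a 0)^{w₁} (a 1)^{w₂} ⋯ (a (m-1))^{w_m} (a 0)^{w_{m+1}} ⋯`. -/
def cyclicWord {A : Type*} (m : ℕ) (a : ℕ → A) (w : List ℕ) : List A :=
  cyclicWordFrom m a 0 w

/-- `w` (a word over `{1,…,k+1}`) contains a forbidden `(k,m)`-factor:
a factor `x' α₁ ⋯ α_j x''` with `1 ≤ j ≤ k`, each `αᵢ` a letter of `{1,…,k+1}`,
`α₁+⋯+α_j ≥ k`, `|x'| = |x''| = n ≡ m - j (mod m)`, `x'₁ ≥ x''₁`, `x'ₙ ≤ x''ₙ`, and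
`x'ᵢ = x''ᵢ` for `i ∈ {2,…,n-1}` (1-indexed). -/
def ForbiddenFactor (k m : ℕ) (w : List ℕ) : Prop :=
  ∃ x' α x'' : List ℕ,
    (x' ++ α ++ x'') <:+: w ∧
    1 ≤ α.length ∧ α.length ≤ k ∧
    (∀ c ∈ α, 1 ≤ c ∧ c ≤ k + 1) ∧
    k ≤ α.sum ∧
    x'.length = x''.length ∧
    x'.length % m = (m - α.length) % m ∧
    x''.getD 0 0 ≤ x'.getD 0 0 ∧
    x'.getD (x'.length - 1) 0 ≤ x''.getD (x''.length - 1) 0 ∧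
    ∀ i, 0 < i → i < x'.length - 1 → x'.getD i 0 = x''.getD i 0

/-- The 8-uniform morphism `f` with `f(0)=11112122`, `f(1)=12112222`, `f(2)=21111222`. -/
def fMorph (v : List ℕ) : List ℕ :=
  v.flatMap fun c =>
    if c = 0 then [1,1,1,1,2,1,2,2]
    else if c = 1 then [1,2,1,1,2,2,2,2]
    else [2,1,1,1,1,2,2,2]

/-- Image of a letter under the morphism `ρ` with `ρ(1)=22`, `ρ(2)=21`. -/
def rhoLetter (c : ℕ) : List ℕ := if c = 1 then [2,2] else [2,1]

/-- The morphism `ρ : {1,2}* → {1,2}*` with `ρ(1)=22`, `ρ(2)=21`. -/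
def rhoWord (v : List ℕ) : List ℕ := v.flatMap rhoLetter

/-- The morphism `d_k` with `d_k(i) = i^{k+1}` for `i ∈ {0,1,2}`. -/
def dMorph (k : ℕ) (w : List ℕ) : List ℕ := w.flatMap fun i => List.replicate (k + 1) i

/-- The morphism `g` with `g(i) = i·a·b`, where the letters `a, b` are coded `3, 4`. -/
def gMorph (w : List ℕ) : List ℕ := w.flatMap fun i => [i, 3, 4]

/-- The morphism `g'` with `g'(i) = i·a·b·c·d`, where `a,b,c,d` are coded `3,4,5,6`. -/
def g'Morph (w : List ℕ) : List ℕ := w.flatMap fun i => [i, 3, 4, 5, 6]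

/-- Insert the letter `c` after every `t` letters of `l`. -/
def insertEvery {A : Type*} (c : A) (t : ℕ) (l : List A) : List A :=
  if _h : l.length ≤ t ∨ t = 0 then l
  else l.take t ++ c :: insertEvery c t (l.drop t)
termination_by l.length
decreasing_by
  simp only [List.length_drop]
  omega

/-- `φ_k` is `n`-avoidable: infinitely many finite words over an `n`-letter alphabet avoid it. -/
def IsNAvoidable (k n : ℕ) : Prop := {w : List (Fin n) | Avoids k w}.Infinite


namespace Str14


lemma infix_pos {v z : List ℕ} (h : v <:+: z) :
    ∃ p, p + v.length ≤ z.length ∧ ∀ j < v.length, z.getD (p + j) 0 = v.getD j 0 := by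
  obtain ⟨s, t, rfl⟩ := h
  refine ⟨s.length, by simp, ?_⟩
  intro j hj
  rw [List.append_assoc, List.getD_append_right _ _ _ _ (by omega)]
  have h1 : s.length + j - s.length = j := by omega
  rw [h1, List.getD_append _ _ _ _ (by omega)]

lemma pos_square {w : List ℕ} {i δ : ℕ} (h1 : 1 ≤ δ) (h2 : i + 2 * δ ≤ w.length)
    (h3 : ∀ x < δ, w.getD (i + x) 0 = w.getD (i + δ + x) 0) : ¬ SquareFree w := by
  intro hsf
  set u : List ℕ := (w.drop i).take δ with hu
  have hlen : u.length = δ := by simp [hu]; omega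
  have hne : u ≠ [] := by
    intro h; rw [h] at hlen; simp at hlen; omega
  apply hsf u hne
  have h2' : (w.drop (i + δ)).take δ = u := by
    apply List.ext_getElem
    · simp [hu]; omega
    · intro j hj hj'
      have hx : j < δ := by simp at hj; omega
      simp only [List.getElem_take, List.getElem_drop, hu]
      rw [← List.getD_eq_getElem w 0 (show i + δ + j < w.length by omega),
        ← List.getD_eq_getElem w 0 (show i + j < w.length by omega)]
      exact (h3 j hx).symm
  have hta : (w.drop i).take (2 * δ) = u ++ u := by
    have h2δ : 2 * δ = δ + δ := by omega
    rw [h2δ, List.take_add, ← hu, List.drop_drop, h2']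
  have : (w.drop i).take (2*δ) <:+: w := by
    exact ((w.drop i).take_prefix (2*δ)).isInfix.trans (w.drop_suffix i).isInfix
  rwa [hta] at this

lemma square_pos {w : List ℕ} (h : ¬ SquareFree w) :
    ∃ i δ, 1 ≤ δ ∧ i + 2 * δ ≤ w.length ∧
      ∀ x < δ, w.getD (i + x) 0 = w.getD (i + δ + x) 0 := by
  simp only [SquareFree, not_forall, not_not] at h
  obtain ⟨u, hne, hinf⟩ := h
  obtain ⟨p, hp, hq⟩ := infix_pos hinf
  have hul : 1 ≤ u.length := List.length_pos_iff.mpr hne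
  refine ⟨p, u.length, hul, by simp at hp; omega, ?_⟩
  intro x hx
  have e1 := hq x (by simp; omega)
  have e2 := hq (u.length + x) (by simp; omega)
  rw [List.getD_append _ _ _ _ (by omega)] at e1
  rw [List.getD_append_right _ _ _ _ (by omega)] at e2
  have h3 : u.length + x - u.length = x := by omega
  rw [h3] at e2
  rw [← Nat.add_assoc] at e2
  rw [e1, e2]



lemma insertEvery_eq_of_le {A : Type*} (c : A) {t : ℕ} {l : List A}
    (h : l.length ≤ t ∨ t = 0) : insertEvery c t l = l := by
  rw [insertEvery]; simp [h]

lemma insertEvery_eq_of_gt {A : Type*} (c : A) {t : ℕ} {l : List A}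
    (h : ¬(l.length ≤ t ∨ t = 0)) :
    insertEvery c t l = l.take t ++ c :: insertEvery c t (l.drop t) := by
  conv_lhs => rw [insertEvery]
  simp [h]

lemma insertEvery_len_ge {A : Type*} (c : A) (t : ℕ) : ∀ N (l : List A), l.length ≤ N →
    l.length ≤ (insertEvery c t l).length := by
  intro N
  induction N with
  | zero =>
    intro l hl
    by_cases h : l.length ≤ t ∨ t = 0
    · rw [insertEvery_eq_of_le c h]
    · rw [insertEvery_eq_of_gt c h]; simp; omega
  | succ M ih =>
    intro l hl
    by_cases h : l.length ≤ t ∨ t = 0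
    · rw [insertEvery_eq_of_le c h]
    · rw [insertEvery_eq_of_gt c h]
      push_neg at h
      have h2 := ih (l.drop t) (by simp; omega)
      simp only [List.length_append, List.length_cons, List.length_take, List.length_drop] at *
      omega

lemma insertEvery_len_le {A : Type*} (c : A) (t : ℕ) : ∀ N (l : List A), l.length ≤ N →
    (insertEvery c t l).length ≤ 2 * l.length := by
  intro N
  induction N with
  | zero =>
    intro l hl
    by_cases h : l.length ≤ t ∨ t = 0
    · rw [insertEvery_eq_of_le c h]; omega
    · rw [insertEvery_eq_of_gt c h]; push_neg at h; simp; omega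
  | succ M ih =>
    intro l hl
    by_cases h : l.length ≤ t ∨ t = 0
    · rw [insertEvery_eq_of_le c h]; omega
    · rw [insertEvery_eq_of_gt c h]
      push_neg at h
      have h2 := ih (l.drop t) (by simp; omega)
      simp only [List.length_append, List.length_cons, List.length_take, List.length_drop] at *
      omega

lemma insertEvery_mem {A : Type*} {c x : A} {t : ℕ} : ∀ N (l : List A), l.length ≤ N →
    x ∈ insertEvery c t l → x = c ∨ x ∈ l := by
  intro N
  induction N with
  | zero =>
    intro l hl
    by_cases h : l.length ≤ t ∨ t = 0
    · rw [insertEvery_eq_of_le c h]; exact fun h => Or.inr h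
    · rw [insertEvery_eq_of_gt c h]; push_neg at h; omega
  | succ M ih =>
    intro l hl hx
    by_cases h : l.length ≤ t ∨ t = 0
    · rw [insertEvery_eq_of_le c h] at hx; exact Or.inr hx
    · rw [insertEvery_eq_of_gt c h] at hx
      push_neg at h
      simp only [List.mem_append, List.mem_cons] at hx
      rcases hx with h1 | h2 | h3
      · exact Or.inr ((l.take_sublist t).subset h1)
      · exact Or.inl h2
      · rcases ih (l.drop t) (by simp; omega) h3 with h4 | h5
        · exact Or.inl h4
        · exact Or.inr ((l.drop_sublist t).subset h5)

/-- The key structural lemma for `insertEvery 5 (3k)`. -/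
lemma IG (k : ℕ) (hk : 1 ≤ k) : ∀ N (l : List ℕ), l.length ≤ N → ∀ s r, r ≤ 3*k →
    s*(3*k+1) + r < (insertEvery 5 (3*k) l).length →
    (r = 3*k ∧ (insertEvery 5 (3*k) l).getD (s*(3*k+1)+r) 0 = 5) ∨
    (r < 3*k ∧ 3*k*s + r < l.length ∧
      (insertEvery 5 (3*k) l).getD (s*(3*k+1)+r) 0 = l.getD (3*k*s+r) 0) := by
  intro N
  induction N with
  | zero =>
    intro l hl s r hr hq
    have hl0 : l.length = 0 := by omega
    have h : l.length ≤ 3*k ∨ 3*k = 0 := by omega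
    rw [insertEvery_eq_of_le 5 h] at hq
    omega
  | succ M ih =>
    intro l hl s r hr hq
    by_cases h : l.length ≤ 3*k ∨ 3*k = 0
    · rw [insertEvery_eq_of_le 5 h] at hq ⊢
      have hlen : l.length ≤ 3*k := by omega
      have hs : s = 0 := by
        by_contra hs
        have : 1*(3*k+1) ≤ s*(3*k+1) := Nat.mul_le_mul_right _ (by omega)
        omega
      subst hs
      right
      simp only [Nat.zero_mul, Nat.zero_add, Nat.mul_zero] at hq ⊢
      exact ⟨by omega, by omega, by trivial⟩
    · rw [insertEvery_eq_of_gt 5 h] at hq ⊢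
      push_neg at h
      obtain ⟨hlgt, -⟩ := h
      rcases Nat.eq_zero_or_pos s with hs | hs
      · subst hs
        simp only [Nat.zero_mul, Nat.zero_add, Nat.mul_zero] at hq ⊢
        rcases Nat.lt_or_ge r (3*k) with hr' | hr'
        · right
          refine ⟨hr', by omega, ?_⟩
          rw [List.getD_append _ _ _ _ (by simp; omega)]
          rw [List.getD_eq_getElem _ _ (by simp; try omega), List.getD_eq_getElem _ _ (by omega),
            List.getElem_take]
        · have hr3 : r = 3*k := by omega
          left
          refine ⟨hr3, ?_⟩
          subst hr3
          rw [List.getD_append_right _ _ _ _ (by simp; try omega)]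
          have h0 : 3*k - (List.take (3*k) l).length = 0 := by simp; try omega
          rw [h0, List.getD_cons_zero]
      · obtain ⟨s', rfl⟩ : ∃ s', s = s' + 1 := ⟨s - 1, by omega⟩
        have hidx : (s'+1)*(3*k+1) + r = (3*k) + (1 + (s'*(3*k+1) + r)) := by ring
        rw [hidx] at hq ⊢
        rw [List.getD_append_right _ _ _ _ (by simp; try omega)]
        have hlt : (3*k) + (1 + (s'*(3*k+1)+r)) - (l.take (3*k)).length
            = 1 + (s'*(3*k+1)+r) := by simp; omega
        rw [hlt]
        have hcons : (5 :: insertEvery 5 (3*k) (l.drop (3*k))).getD (1 + (s'*(3*k+1)+r)) 0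
            = (insertEvery 5 (3*k) (l.drop (3*k))).getD (s'*(3*k+1)+r) 0 := by
          rw [Nat.add_comm 1 _, List.getD_cons_succ]
        rw [hcons]
        have hq' : s'*(3*k+1) + r < (insertEvery 5 (3*k) (l.drop (3*k))).length := by
          simp only [List.length_append, List.length_cons, List.length_take] at hq
          omega
        rcases ih (l.drop (3*k)) (by simp; omega) s' r hr hq' with ⟨h1, h2⟩ | ⟨h1, h2, h3⟩
        · exact Or.inl ⟨h1, h2⟩
        · right
          refine ⟨h1, ?_, ?_⟩
          · simp only [List.length_drop] at h2
            have : 3*k*(s'+1) + r = 3*k + (3*k*s' + r) := by ring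
            omega
          · rw [h3]
            have hidx2 : 3*k*(s'+1) + r = 3*k + (3*k*s' + r) := by ring
            rw [hidx2]
            rw [List.getD_eq_getElem _ _ (by simpa using h2),
              List.getD_eq_getElem _ _ (by simp at h2; omega), List.getElem_drop]



lemma glen (v : List ℕ) : (gMorph v).length = 3 * v.length := by
  induction v with
  | nil => simp [gMorph]
  | cons a v ih =>
    simp only [gMorph, List.flatMap_cons, List.length_append] at *
    simp [ih]; ring

lemma gcons (a : ℕ) (v : List ℕ) : gMorph (a :: v) = [a, 3, 4] ++ gMorph v := by
  simp [gMorph]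

lemma gget (v : List ℕ) : ∀ t, t < v.length →
    (gMorph v).getD (3*t) 0 = v.getD t 0 ∧ (gMorph v).getD (3*t+1) 0 = 3 ∧
    (gMorph v).getD (3*t+2) 0 = 4 := by
  induction v with
  | nil => intro t ht; simp at ht
  | cons a v ih =>
    intro t ht
    cases t with
    | zero => simp [gcons]
    | succ t' =>
      obtain ⟨h1, h2, h3⟩ := ih t' (by simp at ht; omega)
      rw [gcons]
      refine ⟨?_, ?_, ?_⟩
      · rw [List.getD_append_right _ _ _ _ (by simp; try omega)]
        have e : 3*(t'+1) - ([a,3,4] : List ℕ).length = 3*t' := by simp; omega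
        rw [e, h1, List.getD_cons_succ]
      · rw [List.getD_append_right _ _ _ _ (by simp; omega)]
        have e : 3*(t'+1)+1 - ([a,3,4] : List ℕ).length = 3*t'+1 := by simp; omega
        rw [e, h2]
      · rw [List.getD_append_right _ _ _ _ (by simp; omega)]
        have e : 3*(t'+1)+2 - ([a,3,4] : List ℕ).length = 3*t'+2 := by simp; omega
        rw [e, h3]

lemma dlen (k : ℕ) (w : List ℕ) : (dMorph k w).length = (k+1) * w.length := by
  induction w with
  | nil => simp [dMorph]
  | cons a w ih =>
    simp only [dMorph, List.flatMap_cons, List.length_append, List.length_replicate] at *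
    simp [ih]; ring

lemma dcons (k a : ℕ) (w : List ℕ) :
    dMorph k (a :: w) = List.replicate (k+1) a ++ dMorph k w := by
  simp [dMorph]

lemma dget (k : ℕ) : ∀ (w : List ℕ) j r, r ≤ k → j < w.length →
    (dMorph k w).getD (j*(k+1) + r) 0 = w.getD j 0 := by
  intro w
  induction w with
  | nil => intro j r _ hj; simp at hj
  | cons a w ih =>
    intro j r hr hj
    cases j with
    | zero =>
      rw [dcons, List.getD_append _ _ _ _ (by simp; omega)]
      simp only [Nat.zero_mul, Nat.zero_add, List.getD_cons_zero]
      rw [List.getD_eq_getElem _ _ (by simp; omega), List.getElem_replicate]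
    | succ j' =>
      have hmul : (j'+1)*(k+1) = j'*(k+1) + (k+1) := by ring
      rw [dcons, List.getD_append_right _ _ _ _ (by simp; omega)]
      have e : (j'+1)*(k+1) + r - (List.replicate (k+1) a).length = j'*(k+1) + r := by
        simp; omega
      rw [e, ih j' r hr (by simp at hj; omega), List.getD_cons_succ]

lemma dmem {k x : ℕ} {w : List ℕ} (h : x ∈ dMorph k w) : x ∈ w := by
  simp only [dMorph, List.mem_flatMap, List.mem_replicate] at h
  obtain ⟨a, ha, -, rfl⟩ := h
  exact ha

lemma gmem {x : ℕ} {v : List ℕ} (h : x ∈ gMorph v) : x ∈ v ∨ x = 3 ∨ x = 4 := by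
  simp only [gMorph, List.mem_flatMap] at h
  obtain ⟨a, ha, hx⟩ := h
  simp at hx
  rcases hx with rfl | rfl | rfl
  · exact Or.inl ha
  · simp
  · simp

/-- dw.getD in terms of w.getD with division. -/
lemma dget' (k : ℕ) (w : List ℕ) (t : ℕ) (ht : t < (dMorph k w).length) :
    (dMorph k w).getD t 0 = w.getD (t/(k+1)) 0 := by
  have h1 : (t/(k+1))*(k+1) + t % (k+1) = t := by
    rw [Nat.mul_comm]; exact Nat.div_add_mod t (k+1)
  rw [dlen] at ht
  have hj : t/(k+1) < w.length := Nat.div_lt_of_lt_mul ht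
  conv_lhs => rw [← h1]
  exact dget k w _ _ (by have := Nat.mod_lt t (show 0 < k+1 by omega); omega) hj


lemma stepF (k : ℕ) (hk : 1 ≤ k) (w : List ℕ) (hsf : SquareFree w) (T0 ℓ' : ℕ)
    (hl : 1 ≤ ℓ') (hra : T0 + 2*ℓ' + k ≤ (k+1) * w.length)
    (hH : ∀ j < ℓ', (dMorph k w).getD (T0+j) 0 = (dMorph k w).getD (T0+j+ℓ'+k) 0) : False := by
  have hHw : ∀ j < ℓ', w.getD ((T0+j)/(k+1)) 0 = w.getD ((T0+j+ℓ'+k)/(k+1)) 0 := by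
    intro j hj
    have h1 : T0 + j < (dMorph k w).length := by rw [dlen]; omega
    have h2 : T0 + j + ℓ' + k < (dMorph k w).length := by rw [dlen]; omega
    rw [← dget' k w _ h1, ← dget' k w _ h2]
    exact hH j hj
  set f : ℕ → ℕ := fun j => (T0+j)/(k+1) with hf
  set g : ℕ → ℕ := fun j => (T0+j+ℓ'+k)/(k+1) with hg
  have hHw' : ∀ j < ℓ', w.getD (f j) 0 = w.getD (g j) 0 := fun j hj => hHw j hj
  have hfg : ∀ j, f j + 1 ≤ g j := by
    intro j
    have h1 : (T0 + j + (k+1)) / (k+1) = (T0+j)/(k+1) + 1 :=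
      Nat.add_div_right _ (by omega)
    have h2 : (T0 + j + (k+1)) ≤ T0 + j + ℓ' + k := by omega
    have h3 := Nat.div_le_div_right (c := k+1) h2
    simp only [hf, hg]
    omega
  have hglt : ∀ j < ℓ', g j < w.length := by
    intro j hj
    apply Nat.div_lt_of_lt_mul
    omega
  have hfsucc : ∀ j, f (j+1) = f j + (if (k+1) ∣ T0 + j + 1 then 1 else 0) := by
    intro j
    simp only [hf]
    have e : T0 + (j+1) = (T0 + j) + 1 := by omega
    rw [e, Nat.succ_div]
  have hgsucc : ∀ j, g (j+1) = g j + (if (k+1) ∣ T0 + j + 1 + ℓ' + k then 1 else 0) := by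
    intro j
    simp only [hg]
    have e : T0 + (j+1) + ℓ' + k = (T0 + j + ℓ' + k) + 1 := by omega
    have e2 : T0 + j + ℓ' + k + 1 = T0 + j + 1 + ℓ' + k := by omega
    rw [e, Nat.succ_div, e2]
  have hT0a : (k+1) * f 0 ≤ T0 := by
    simp only [hf]
    have h1 := Nat.div_add_mod (T0 + 0) (k+1)
    omega
  have hT0b : T0 < (k+1) * f 0 + (k+1) := by
    simp only [hf]
    have h1 := Nat.div_add_mod (T0 + 0) (k+1)
    have h2 := Nat.mod_lt (T0 + 0) (show 0 < k+1 by omega)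
    omega
  by_cases hPQ : ∀ j, j + 1 < ℓ' → ((k+1) ∣ (T0+j+1) ↔ (k+1) ∣ (T0+j+1+ℓ'+k))
  · by_cases hstep : ∃ j, j + 1 < ℓ' ∧ (k+1) ∣ (T0 + j + 1)
    · -- case III-a : aligned, get long square
      obtain ⟨j0, hj0, hdvd0⟩ := hstep
      have hdvd1 : (k+1) ∣ (T0 + j0 + 1 + ℓ' + k) := (hPQ j0 hj0).mp hdvd0
      have hdvd : (k+1) ∣ (ℓ' + k) := by
        have h5 := Nat.dvd_sub hdvd1 hdvd0
        have e : T0 + j0 + 1 + ℓ' + k - (T0 + j0 + 1) = ℓ' + k := by omega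
        rwa [e] at h5
      obtain ⟨δ, hδ⟩ := hdvd
      have hδ1 : 1 ≤ δ := by
        rcases Nat.eq_zero_or_pos δ with h|h
        · rw [h] at hδ; omega
        · exact h
      have hgf : ∀ j, g j = f j + δ := by
        intro j
        simp only [hf, hg]
        have e : T0 + j + ℓ' + k = T0 + j + (k+1) * δ := by omega
        rw [e, Nat.add_mul_div_left _ _ (show 0 < k+1 by omega)]
      have hsurj : ∀ x < δ, ∃ j < ℓ', f j = f 0 + x := by
        intro x hx
        rcases Nat.eq_zero_or_pos x with rfl | hx1
        · exact ⟨0, by omega, by omega⟩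
        · refine ⟨(k+1)*(f 0 + x) - T0, ?_, ?_⟩
          · have e1 : (k+1)*(f 0 + x) = (k+1)*(f 0) + (k+1)*x := by ring
            have e2 : (k+1)*(x+1) ≤ (k+1)*δ := Nat.mul_le_mul_left _ (by omega)
            have e3 : (k+1)*(x+1) = (k+1)*x + (k+1) := by ring
            omega
          · have e1 : (k+1)*(f 0 + x) = (k+1)*(f 0) + (k+1)*x := by ring
            have hjge : T0 ≤ (k+1)*(f 0 + x) := by
              have e2 : (k+1)*1 ≤ (k+1)*x := Nat.mul_le_mul_left _ (by omega)
              omega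
            simp only [hf] at hjge ⊢
            have e4 : T0 + ((k+1)*((T0+0)/(k+1) + x) - T0) = (k+1)*((T0+0)/(k+1) + x) := by
              omega
            rw [e4, Nat.mul_div_cancel_left _ (show 0 < k+1 by omega)]
      have hsq : ∀ x < δ, w.getD (f 0 + x) 0 = w.getD (f 0 + δ + x) 0 := by
        intro x hx
        obtain ⟨j, hjl, hjx⟩ := hsurj x hx
        have h5 := hHw' j hjl
        rw [hjx, hgf j, hjx] at h5
        have e : f 0 + x + δ = f 0 + δ + x := by omega
        rwa [e] at h5
      have hrange : f 0 + 2*δ ≤ w.length := by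
        obtain ⟨j, hjl, hjx⟩ := hsurj (δ-1) (by omega)
        have h1 := hglt j hjl
        have h2 := hgf j
        omega
      exact pos_square hδ1 hrange hsq hsf
    · -- f is constant on [0, ℓ') ; short square
      push_neg at hstep
      have hconst : ∀ j < ℓ', f j = f 0 := by
        intro j
        induction j with
        | zero => intro _; rfl
        | succ j' ih =>
          intro hj
          have h1 := hfsucc j'
          rw [if_neg (hstep j' hj)] at h1
          rw [h1, ih (by omega)]
          omega
      have hflast : f (ℓ'-1) = f 0 := hconst (ℓ'-1) (by omega)
      have hbound : T0 + ℓ' - 1 < (k+1) * (f 0) + (k+1) := by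
        by_contra hcon
        push_neg at hcon
        have h5 : (f 0 + 1)*(k+1) ≤ T0 + (ℓ'-1) := by
          have e : (f 0 + 1)*(k+1) = (k+1)*(f 0) + (k+1) := by ring
          omega
        have h2 : f 0 + 1 ≤ (T0 + (ℓ'-1))/(k+1) :=
          (Nat.le_div_iff_mul_le (show 0 < k+1 by omega)).mpr h5
        have h3 : f (ℓ'-1) = (T0 + (ℓ'-1))/(k+1) := rfl
        omega
      have hg0 : g 0 = f 0 + 1 := by
        have hle : (f 0 + 1) * (k+1) ≤ T0 + 0 + ℓ' + k := by
          have e : (f 0 + 1)*(k+1) = (k+1)*(f 0) + (k+1) := by ring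
          omega
        have hlt : T0 + 0 + ℓ' + k < (f 0 + 2) * (k+1) := by
          have e : (f 0 + 2)*(k+1) = (k+1)*(f 0) + 2*(k+1) := by ring
          omega
        have h1 : f 0 + 1 ≤ g 0 :=
          (Nat.le_div_iff_mul_le (show 0 < k+1 by omega)).mpr hle
        have h2 : g 0 < f 0 + 2 := by
          simp only [hg]
          rw [Nat.div_lt_iff_lt_mul (show 0 < k+1 by omega)]
          omega
        omega
      have hsq : ∀ x < 1, w.getD (f 0 + x) 0 = w.getD (f 0 + 1 + x) 0 := by
        intro x hx
        obtain rfl : x = 0 := by omega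
        have hH0 : w.getD (f 0) 0 = w.getD (g 0) 0 := hHw' 0 (by omega)
        rw [Nat.add_zero, Nat.add_zero, hH0, hg0]
      have hrange : f 0 + 2*1 ≤ w.length := by
        have h5 := hglt 0 (by omega)
        omega
      exact pos_square (by omega) hrange hsq hsf
  · -- unsynced step : short square
    push_neg at hPQ
    obtain ⟨j, hj, hiff⟩ := hPQ
    have a1 : w.getD (f j) 0 = w.getD (g j) 0 := hHw' j (by omega)
    have a2 : w.getD (f (j+1)) 0 = w.getD (g (j+1)) 0 := hHw' (j+1) hj
    rcases hiff with ⟨hP, hQ⟩ | ⟨hP, hQ⟩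
    · have h1 : f (j+1) = f j + 1 := by rw [hfsucc, if_pos hP]
      have h2 : g (j+1) = g j := by rw [hgsucc, if_neg hQ]; omega
      rw [h1, h2] at a2
      have key : w.getD (f j) 0 = w.getD (f j + 1) 0 := by rw [a1, ← a2]
      have hrange : f j + 2*1 ≤ w.length := by
        have h3 := hglt (j+1) hj
        have h4 := hfg (j+1)
        omega
      have hsq : ∀ x < 1, w.getD (f j + x) 0 = w.getD (f j + 1 + x) 0 := by
        intro x hx
        obtain rfl : x = 0 := by omega
        rw [Nat.add_zero, Nat.add_zero]
        exact key
      exact pos_square (by omega) hrange hsq hsf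
    · have h1 : f (j+1) = f j := by rw [hfsucc, if_neg hP]; omega
      have h2 : g (j+1) = g j + 1 := by rw [hgsucc, if_pos hQ]
      rw [h1, h2] at a2
      have key : w.getD (g j) 0 = w.getD (g j + 1) 0 := by rw [← a1, a2]
      have hrange : g j + 2*1 ≤ w.length := by
        have h3 := hglt (j+1) hj
        omega
      have hsq : ∀ x < 1, w.getD (g j + x) 0 = w.getD (g j + 1 + x) 0 := by
        intro x hx
        obtain rfl : x = 0 := by omega
        rw [Nat.add_zero, Nat.add_zero]
        exact key
      exact pos_square (by omega) hrange hsq hsf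



lemma classOf (k : ℕ) (hk : 1 ≤ k) (w : List ℕ) (hw : ∀ c ∈ w, c ≤ 2) (s r : ℕ)
    (hr : r ≤ 3*k)
    (hq : s*(3*k+1) + r < (insertEvery 5 (3*k) (gMorph (dMorph k w))).length) :
    (r = 3*k ∧ (insertEvery 5 (3*k) (gMorph (dMorph k w))).getD (s*(3*k+1)+r) 0 = 5) ∨
    (r < 3*k ∧ r % 3 = 0 ∧ (insertEvery 5 (3*k) (gMorph (dMorph k w))).getD (s*(3*k+1)+r) 0 ≤ 2) ∨
    (r < 3*k ∧ r % 3 = 1 ∧ (insertEvery 5 (3*k) (gMorph (dMorph k w))).getD (s*(3*k+1)+r) 0 = 3) ∨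
    (r < 3*k ∧ r % 3 = 2 ∧ (insertEvery 5 (3*k) (gMorph (dMorph k w))).getD (s*(3*k+1)+r) 0 = 4) := by
  rcases IG k hk (gMorph (dMorph k w)).length _ le_rfl s r hr hq with ⟨h1,h2⟩|⟨h1,h2,h3⟩
  · exact Or.inl ⟨h1, h2⟩
  · have hzlen := glen (dMorph k w)
    obtain ⟨r1, e, he, hre⟩ : ∃ r1 e, e < 3 ∧ r = 3*r1 + e := ⟨r/3, r%3, by omega, by omega⟩
    have hmeq : 3*k*s + r = 3*(k*s+r1) + e := by rw [hre]; ring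
    have ht : k*s + r1 < (dMorph k w).length := by omega
    obtain ⟨hg1, hg2, hg3⟩ := gget (dMorph k w) (k*s+r1) ht
    rw [hmeq] at h3
    interval_cases e
    · right; left
      refine ⟨h1, by omega, ?_⟩
      rw [h3]
      show (gMorph (dMorph k w)).getD (3*(k*s+r1)) 0 ≤ 2
      rw [hg1]
      have hmem : (dMorph k w).getD (k*s+r1) 0 ∈ dMorph k w := by
        rw [List.getD_eq_getElem _ _ ht]; exact List.getElem_mem _
      exact hw _ (dmem hmem)
    · exact Or.inr (Or.inr (Or.inl ⟨h1, by omega, by rw [h3, hg2]⟩))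
    · exact Or.inr (Or.inr (Or.inr ⟨h1, by omega, by rw [h3, hg3]⟩))

lemma val5 (k : ℕ) (hk : 1 ≤ k) (w : List ℕ) (hw : ∀ c ∈ w, c ≤ 2) (s r : ℕ)
    (hr : r ≤ 3*k)
    (hq : s*(3*k+1) + r < (insertEvery 5 (3*k) (gMorph (dMorph k w))).length)
    (hv : (insertEvery 5 (3*k) (gMorph (dMorph k w))).getD (s*(3*k+1)+r) 0 = 5) :
    r = 3*k := by
  rcases classOf k hk w hw s r hr hq with h|h|h|h <;> omega

lemma digit_val (k : ℕ) (hk : 1 ≤ k) (w : List ℕ) (s r1 : ℕ) (hr1 : r1 < k)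
    (hq : s*(3*k+1) + 3*r1 < (insertEvery 5 (3*k) (gMorph (dMorph k w))).length) :
    k*s + r1 < (dMorph k w).length ∧
    (insertEvery 5 (3*k) (gMorph (dMorph k w))).getD (s*(3*k+1)+3*r1) 0
      = (dMorph k w).getD (k*s+r1) 0 := by
  rcases IG k hk (gMorph (dMorph k w)).length _ le_rfl s (3*r1) (by omega) hq with
    ⟨h1,h2⟩|⟨h1,h2,h3⟩
  · omega
  · have hzlen := glen (dMorph k w)
    have hmeq : 3*k*s + 3*r1 = 3*(k*s+r1) := by ring
    have ht : k*s + r1 < (dMorph k w).length := by omega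
    have hg := (gget (dMorph k w) (k*s+r1) ht).1
    rw [hmeq] at h3
    exact ⟨ht, by rw [h3, hg]⟩

lemma pairP (k : ℕ) (hk : 1 ≤ k) (w : List ℕ) (hw : ∀ c ∈ w, c ≤ 2) (x y : ℕ)
    (hxy : [x,y] <:+: insertEvery 5 (3*k) (gMorph (dMorph k w))) :
    (x ≤ 2 ∧ y = 3) ∨ (x = 3 ∧ y = 4) ∨ (x = 4 ∧ y ≤ 2) ∨ (x = 4 ∧ y = 5) ∨
    (x = 5 ∧ y ≤ 2) := by
  obtain ⟨p, hp, hpq⟩ := infix_pos hxy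
  simp only [List.length_cons, List.length_nil] at hp
  have hx : (insertEvery 5 (3*k) (gMorph (dMorph k w))).getD p 0 = x := by
    have := hpq 0 (by simp)
    simpa using this
  have hy : (insertEvery 5 (3*k) (gMorph (dMorph k w))).getD (p+1) 0 = y := by
    have := hpq 1 (by simp)
    simpa using this
  obtain ⟨s, r, hrb, hpe⟩ : ∃ s r, r ≤ 3*k ∧ p = s*(3*k+1)+r := by
    refine ⟨p/(3*k+1), p%(3*k+1), ?_, ?_⟩
    · have := Nat.mod_lt p (show 0 < 3*k+1 by omega); omega
    · have h := Nat.div_add_mod p (3*k+1)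
      have e : (p/(3*k+1))*(3*k+1) = (3*k+1)*(p/(3*k+1)) := by ring
      omega
  rw [hpe] at hx hy hp
  rcases Nat.lt_or_ge r (3*k) with hrlt | hrge
  · have hidx : s*(3*k+1)+r+1 = s*(3*k+1)+(r+1) := by omega
    rw [hidx] at hy
    rcases classOf k hk w hw s r hrb (by omega) with h|h|h|h
    · omega
    · rcases classOf k hk w hw s (r+1) (by omega) (by omega) with h'|h'|h'|h' <;>
        [omega; omega; (left; omega); omega]
    · rcases classOf k hk w hw s (r+1) (by omega) (by omega) with h'|h'|h'|h' <;>
        [omega; omega; omega; (right; left; omega)]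
    · rcases classOf k hk w hw s (r+1) (by omega) (by omega) with h'|h'|h'|h' <;>
        [(right; right; right; left; omega); (right; right; left; omega); omega; omega]
  · have hr3 : r = 3*k := by omega
    subst hr3
    have hx5 : x = 5 := by
      rcases classOf k hk w hw s (3*k) hrb (by omega) with h|h|h|h <;> omega
    have hidx : s*(3*k+1)+3*k+1 = (s+1)*(3*k+1) + 0 := by ring
    rw [hidx] at hy
    rcases classOf k hk w hw (s+1) 0 (by omega) (by omega) with h'|h'|h'|h'
    · omega
    · right; right; right; right; omega
    · omega
    · omega

lemma noRevPair (k : ℕ) (hk : 1 ≤ k) (w : List ℕ) (hw : ∀ c ∈ w, c ≤ 2) (x y : ℕ)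
    (h1 : [x,y] <:+: insertEvery 5 (3*k) (gMorph (dMorph k w)))
    (h2 : [y,x] <:+: insertEvery 5 (3*k) (gMorph (dMorph k w))) : False := by
  have p1 := pairP k hk w hw x y h1
  have p2 := pairP k hk w hw y x h2
  rcases p1 with h|h|h|h|h <;> rcases p2 with h'|h'|h'|h'|h' <;> omega

theorem part1 (k : ℕ) (hk : 1 ≤ k) (w : List ℕ) (hw : ∀ c ∈ w, c ≤ 2) (hsf : SquareFree w) :
    Avoids (3*k+1) (insertEvery 5 (3*k) (gMorph (dMorph k w))) := by
  set uu := insertEvery 5 (3*k) (gMorph (dMorph k w)) with huu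
  have classOf' : ∀ s r : ℕ, r ≤ 3*k → s*(3*k+1) + r < uu.length →
      (r = 3*k ∧ uu.getD (s*(3*k+1)+r) 0 = 5) ∨
      (r < 3*k ∧ r % 3 = 0 ∧ uu.getD (s*(3*k+1)+r) 0 ≤ 2) ∨
      (r < 3*k ∧ r % 3 = 1 ∧ uu.getD (s*(3*k+1)+r) 0 = 3) ∨
      (r < 3*k ∧ r % 3 = 2 ∧ uu.getD (s*(3*k+1)+r) 0 = 4) :=
    fun s r hr hq => classOf k hk w hw s r hr hq
  have val5' : ∀ s r : ℕ, r ≤ 3*k → s*(3*k+1) + r < uu.length →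
      uu.getD (s*(3*k+1)+r) 0 = 5 → r = 3*k :=
    fun s r hr hq hv => val5 k hk w hw s r hr hq hv
  have digit_val' : ∀ s r1 : ℕ, r1 < k → s*(3*k+1) + 3*r1 < uu.length →
      k*s + r1 < (dMorph k w).length ∧
      uu.getD (s*(3*k+1)+3*r1) 0 = (dMorph k w).getD (k*s+r1) 0 :=
    fun s r1 hr1 hq => digit_val k hk w s r1 hr1 hq
  have hval5at : ∀ s : ℕ, s*(3*k+1)+3*k < uu.length → uu.getD (s*(3*k+1)+3*k) 0 = 5 := by
    intro s hq
    rcases classOf' s (3*k) le_rfl hq with h|h|h|h <;> omega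
  intro hEnc
  obtain ⟨X, Ys, hYlen, hXne, hYne, hfac, hrev⟩ := hEnc
  -- Step 1: all Y have length 1
  have hY1 : ∀ Y ∈ Ys, Y.length = 1 := by
    intro Y hY
    have hYn := hYne Y hY
    by_contra hly
    have h2 : 2 ≤ Y.length := by
      have := List.length_pos_iff.mpr hYn
      omega
    obtain ⟨y0, y1, Y2, rfl⟩ : ∃ y0 y1 Y2, Y = y0 :: y1 :: Y2 := by
      rcases Y with _|⟨y0, Y'⟩
      · simp at hYn
      · rcases Y' with _|⟨y1, Y2⟩
        · simp at h2
        · exact ⟨y0, y1, Y2, rfl⟩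
    obtain ⟨l1, l2, rfl⟩ := List.append_of_mem hY
    have hYinf : (y0 :: y1 :: Y2) <:+: uu := by
      apply List.IsInfix.trans _ hfac
      refine ⟨X ++ l1.flatten, l2.flatten ++ X, ?_⟩
      simp [List.flatten_append, List.append_assoc]
    have hpair1 : [y0, y1] <:+: uu := by
      apply List.IsInfix.trans _ hYinf
      exact ⟨[], Y2, by simp⟩
    have hpair2 : [y1, y0] <:+: uu := by
      apply List.IsInfix.trans _ (hrev _ hY)
      refine ⟨Y2.reverse, [], by simp⟩
    exact noRevPair k hk w hw y0 y1 hpair1 hpair2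
  -- Step 2: flatten has length 3k+1
  have haux : ∀ (Zs : List (List ℕ)), (∀ Y ∈ Zs, Y.length = 1) →
      Zs.flatten.length = Zs.length := by
    intro Zs
    induction Zs with
    | nil => simp
    | cons q as ih =>
      intro h
      simp only [List.flatten_cons, List.length_append, List.length_cons,
        ih (fun Y hY => h Y (by simp [hY])), h q (by simp)]
      omega
  have hflat : Ys.flatten.length = 3*k+1 := by rw [haux Ys hY1, hYlen]
  -- Step 3: positions
  obtain ⟨p, hpL, hpv⟩ := infix_pos hfac
  have hvlen : (X ++ Ys.flatten ++ X).length = X.length + (3*k+1) + X.length := by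
    simp [hflat]; omega
  rw [hvlen] at hpL
  have hXpos : 1 ≤ X.length := List.length_pos_iff.mpr hXne
  have hXeq : ∀ i < X.length,
      uu.getD (p+i) 0 = uu.getD (p + (X.length + (3*k+1) + i)) 0 := by
    intro i hi
    have e1 := hpv i (by omega)
    have e2 := hpv (X.length + (3*k+1) + i) (by omega)
    have f1 : (X ++ Ys.flatten ++ X).getD i 0 = X.getD i 0 := by
      rw [List.append_assoc, List.getD_append _ _ _ _ hi]
    have f2 : (X ++ Ys.flatten ++ X).getD (X.length + (3*k+1) + i) 0 = X.getD i 0 := by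
      rw [List.append_assoc, List.getD_append_right _ _ _ _ (by omega)]
      rw [show X.length + (3*k+1) + i - X.length = (3*k+1) + i from by omega]
      rw [List.getD_append_right _ _ _ _ (by omega)]
      rw [show (3*k+1) + i - Ys.flatten.length = i from by omega]
    rw [e1, e2, f1, f2]
  -- decompose p
  obtain ⟨sp, a, hab, hpe⟩ : ∃ sp a, a ≤ 3*k ∧ p = sp*(3*k+1)+a := by
    refine ⟨p/(3*k+1), p%(3*k+1), ?_, ?_⟩
    · have := Nat.mod_lt p (show 0 < 3*k+1 by omega); omega
    · have h := Nat.div_add_mod p (3*k+1)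
      have e : (p/(3*k+1))*(3*k+1) = (3*k+1)*(p/(3*k+1)) := by ring
      omega
  -- common final goal
  suffices hfin : ∃ T0 ℓ', 1 ≤ ℓ' ∧ T0 + 2*ℓ' + k ≤ (k+1) * w.length ∧
      ∀ j < ℓ', (dMorph k w).getD (T0+j) 0 = (dMorph k w).getD (T0+j+ℓ'+k) 0 by
    obtain ⟨T0, ℓ', h1, h2, h3⟩ := hfin
    exact stepF k hk w hsf T0 ℓ' h1 h2 h3
  have hdwlen : (dMorph k w).length = (k+1) * w.length := dlen k w
  by_cases hc : ∃ i, i < X.length ∧ ∃ s', p + i = s'*(3*k+1) + 3*k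
  · -- CASE A
    obtain ⟨ic, hic, sc, hsc⟩ := hc
    have hv1 : uu.getD (p+ic) 0 = 5 := by
      rw [hsc]
      exact hval5at sc (by omega)
    have hv2 : uu.getD (p + (X.length + (3*k+1) + ic)) 0 = 5 := by
      rw [← hXeq ic hic]; exact hv1
    obtain ⟨cX, ρ, hρ, hXlen⟩ : ∃ cX ρ, ρ ≤ 3*k ∧ X.length = cX*(3*k+1)+ρ := by
      refine ⟨X.length/(3*k+1), X.length%(3*k+1), ?_, ?_⟩
      · have := Nat.mod_lt X.length (show 0 < 3*k+1 by omega); omega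
      · have h := Nat.div_add_mod X.length (3*k+1)
        have e : (X.length/(3*k+1))*(3*k+1) = (3*k+1)*(X.length/(3*k+1)) := by ring
        omega
    have hρ0 : ρ = 0 := by
      by_contra hρne
      have hidx : p + (X.length + (3*k+1) + ic) = (sc + cX + 2)*(3*k+1) + (ρ - 1) := by
        have e : (sc + cX + 2)*(3*k+1) = sc*(3*k+1) + cX*(3*k+1) + 2*(3*k+1) := by ring
        omega
      rw [hidx] at hv2
      have := val5' (sc+cX+2) (ρ-1) (by omega) (by omega) hv2
      omega
    have hcX : 1 ≤ cX := by
      rcases Nat.eq_zero_or_pos cX with h|h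
      · rw [h] at hXlen; simp at hXlen; omega
      · exact h
    -- pos machinery
    have posrep : ∀ t : ℕ, ∃ s r', r' < k ∧ t = k*s + r' ∧
        3*t + t/k = s*(3*k+1) + 3*r' := by
      intro t
      refine ⟨t/k, t%k, Nat.mod_lt _ (by omega), ?_, ?_⟩
      · have := Nat.div_add_mod t k; omega
      · have h1 := Nat.div_add_mod t k
        have e : 3*(k*(t/k) + t%k) + t/k = (t/k)*(3*k+1) + 3*(t%k) := by ring
        omega
    have posmono : ∀ t1 t2 : ℕ, t1 ≤ t2 → 3*t1 + t1/k ≤ 3*t2 + t2/k := by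
      intro t1 t2 h
      have := Nat.div_le_div_right (c := k) h
      omega
    have posaddk : ∀ (t c : ℕ), 3*(t + c*k) + (t + c*k)/k = (3*t + t/k) + c*(3*k+1) := by
      intro t c
      have h1 : (t + c*k)/k = t/k + c := by
        rw [show t + c*k = t + k*c from by ring,
          Nat.add_mul_div_left _ _ (show 0 < k by omega)]
      have e : 3*(t + c*k) + (t/k + c) = 3*t + t/k + c*(3*k+1) := by ring
      omega
    have posk : ∀ s : ℕ, 3*(k*s) + (k*s)/k = s*(3*k+1) := by
      intro s
      have := posaddk 0 s
      simp only [Nat.zero_add, Nat.zero_mul, Nat.zero_div, Nat.mul_zero] at this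
      rw [show s*k = k*s from by ring] at this
      omega
    have hPex : ∃ t : ℕ, p ≤ 3*t + t/k := ⟨p, le_trans (by omega) (Nat.le_add_right _ _)⟩
    set T0 := Nat.find hPex with hT0
    have hT0p : p ≤ 3*T0 + T0/k := Nat.find_spec hPex
    have hT0min : ∀ t, t < T0 → 3*t + t/k < p := by
      intro t ht
      have := Nat.find_min hPex ht
      omega
    have hT0ub : 3*T0 + T0/k ≤ p + 3*k := by
      rcases Nat.eq_zero_or_pos a with ha | ha
      · have hfind : T0 ≤ k*sp := Nat.find_le (by rw [posk sp]; omega)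
        have := posmono T0 (k*sp) hfind
        have := posk sp
        omega
      · have he : (sp+1)*(3*k+1) = sp*(3*k+1) + (3*k+1) := by ring
        have hfind : T0 ≤ k*(sp+1) := Nat.find_le (by rw [posk (sp+1)]; omega)
        have := posmono T0 (k*(sp+1)) hfind
        have := posk (sp+1)
        omega
    have hkcX : 1 ≤ cX * k := by
      have := Nat.mul_le_mul hcX hk
      omega
    have hjbU : 3*(T0 + cX*k - 1) + (T0 + cX*k - 1)/k < p + X.length := by
      rcases Nat.eq_zero_or_pos T0 with h0 | h0
      · have hmono2 := posmono (T0 + cX*k - 1) (cX*k - 1) (by omega)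
        have hstep : 3*(cX*k - 1) + (cX*k - 1)/k + 3 ≤ 3*(cX*k) + (cX*k)/k := by
          have h5 : (cX*k - 1)/k ≤ (cX*k)/k :=
            Nat.div_le_div_right (by omega)
          omega
        have hq0 : 3*(cX*k) + (cX*k)/k = cX*(3*k+1) := by
          rw [show cX*k = k*cX from by ring]
          exact posk cX
        omega
      · have e1 : T0 + cX*k - 1 = (T0 - 1) + cX*k := by omega
        have e2 := posaddk (T0 - 1) cX
        have e3 := hT0min (T0-1) (by omega)
        rw [e1]
        omega
    have keyA : ∀ j, j < cX*k → ((dMorph k w).getD (T0+j) 0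
        = (dMorph k w).getD (T0+j+cX*k+k) 0 ∧ T0+j+cX*k+k < (dMorph k w).length) := by
      intro j hj
      obtain ⟨s, r', hr', hts, hposeq⟩ := posrep (T0+j)
      have hlow : p ≤ 3*(T0+j) + (T0+j)/k := by
        have := posmono T0 (T0+j) (by omega)
        omega
      have hup : 3*(T0+j) + (T0+j)/k < p + X.length := by
        have := posmono (T0+j) (T0 + cX*k - 1) (by omega)
        omega
      set Q := s*(3*k+1) + 3*r' with hQ
      have hQl : p ≤ Q := by omega
      have hQu : Q < p + X.length := by omega
      have hXi := hXeq (Q - p) (by omega)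
      rw [show p + (Q - p) = Q from by omega] at hXi
      have hidx2 : p + (X.length + (3*k+1) + (Q - p)) = (s + cX + 1)*(3*k+1) + 3*r' := by
        have e : (s + cX + 1)*(3*k+1) = s*(3*k+1) + cX*(3*k+1) + (3*k+1) := by ring
        omega
      rw [hidx2] at hXi
      have hd1 := digit_val' s r' hr' (by omega)
      have hd2 := digit_val' (s + cX + 1) r' hr' (by rw [← hidx2]; omega)
      have e2 : k*(s+cX+1) + r' = (k*s+r') + cX*k + k := by ring
      constructor
      · rw [show T0+j+cX*k+k = k*(s+cX+1) + r' from by omega,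
          show T0+j = k*s + r' from hts, ← hd1.2, ← hd2.2]
        exact hXi
      · have := hd2.1
        omega
    refine ⟨T0, cX*k, hkcX, ?_, fun j hj => (keyA j hj).1⟩
    have := (keyA (cX*k - 1) (by omega)).2
    omega
  · -- CASE B
    push_neg at hc
    have haX : a + X.length ≤ 3*k := by
      by_contra hcon
      push_neg at hcon
      exact hc (3*k - a) (by omega) sp (by omega)
    have haX2 : a + 2*X.length ≤ 3*k := by
      by_contra hcon
      push_neg at hcon
      set i := 3*k - a - X.length with hi
      have hilt : i < X.length := by omega
      have hidx2 : p + (X.length + (3*k+1) + i) = (sp+1)*(3*k+1) + 3*k := by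
        have e : (sp+1)*(3*k+1) = sp*(3*k+1) + (3*k+1) := by ring
        omega
      have elink : (sp+1)*(3*k+1) = sp*(3*k+1) + (3*k+1) := by ring
      have hv2 : uu.getD (p + (X.length + (3*k+1) + i)) 0 = 5 := by
        rw [hidx2]
        exact hval5at (sp+1) (by omega)
      have hv1 : uu.getD (p+i) 0 = 5 := by rw [hXeq i hilt]; exact hv2
      rw [show p + i = sp*(3*k+1) + (a+i) from by omega] at hv1
      have := val5' sp (a+i) (by omega) (by omega) hv1
      omega
    have h3X : X.length % 3 = 0 := by
      have elink : (sp+1)*(3*k+1) = sp*(3*k+1) + (3*k+1) := by ring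
      have e0 := hXeq 0 (by omega)
      rw [show p + 0 = sp*(3*k+1) + a from by omega,
        show p + (X.length + (3*k+1) + 0) = (sp+1)*(3*k+1) + (a + X.length) from by
          have e : (sp+1)*(3*k+1) = sp*(3*k+1) + (3*k+1) := by ring
          omega] at e0
      rcases classOf' sp a (by omega) (by omega) with h|h|h|h <;>
        rcases classOf' (sp+1) (a + X.length) (by omega) (by omega) with h'|h'|h'|h' <;>
        omega
    set L' := X.length / 3 with hL'
    have h3L : 3*L' = X.length := by omega
    have hL1 : 1 ≤ L' := by omega
    obtain ⟨o, ho2, hao⟩ : ∃ o, o ≤ 2 ∧ (a + o) % 3 = 0 :=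
      ⟨(3 - a % 3) % 3, by omega, by omega⟩
    set A3 := (a+o)/3 with hA3
    have h3A : 3*A3 = a + o := by omega
    have keyB : ∀ j, j < L' → ((dMorph k w).getD (k*sp + A3 + j) 0
        = (dMorph k w).getD (k*sp + A3 + j + L' + k) 0 ∧
        k*sp + A3 + j + L' + k < (dMorph k w).length) := by
      intro j hj
      have hio : o + 3*j < X.length := by omega
      have hXi := hXeq (o + 3*j) hio
      rw [show p + (o + 3*j) = sp*(3*k+1) + 3*(A3 + j) from by omega,
        show p + (X.length + (3*k+1) + (o + 3*j))
            = (sp+1)*(3*k+1) + 3*(A3 + L' + j) from by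
          have e : (sp+1)*(3*k+1) = sp*(3*k+1) + (3*k+1) := by ring
          omega] at hXi
      have hrb1 : A3 + j < k := by omega
      have hrb2 : A3 + L' + j < k := by omega
      have hd1 := digit_val' sp (A3+j) hrb1 (by
        have : sp*(3*k+1) + 3*(A3+j) = p + (o + 3*j) := by omega
        omega)
      have hd2 := digit_val' (sp+1) (A3+L'+j) hrb2 (by
        have : (sp+1)*(3*k+1) + 3*(A3+L'+j) = p + (X.length + (3*k+1) + (o + 3*j)) := by
          have e : (sp+1)*(3*k+1) = sp*(3*k+1) + (3*k+1) := by ring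
          omega
        omega)
      have e2 : k*(sp+1) + (A3+L'+j) = (k*sp + A3 + j) + L' + k := by ring
      constructor
      · rw [show k*sp + A3 + j = k*sp + (A3+j) from by omega, ← hd1.2,
          show k*sp + (A3+j) + L' + k = k*(sp+1) + (A3+L'+j) from by omega, ← hd2.2]
        exact hXi
      · have := hd2.1
        omega
    refine ⟨k*sp + A3, L', hL1, ?_, fun j hj => (keyB j hj).1⟩
    have := (keyB (L'-1) (by omega)).2
    omega


def imgH : ℕ → List ℕ := fun c =>
  if c = 0 then [0,1,0,2,0,1,2,1,0,1,2]
  else if c = 1 then [0,2,1,0,1,2,1,0,2,1,2]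
  else [0,2,1,0,2,0,1,0,2,1,2]

def hM (v : List ℕ) : List ℕ := v.flatMap imgH

def pref : List ℕ → List ℕ → Bool
  | [], _ => true
  | _ :: _, [] => false
  | a :: as, b :: bs => a == b && pref as bs

def anySq (z : List ℕ) : Bool :=
  (List.range (z.length/2 + 1)).any (fun l => 1 ≤ l && pref (z.take l) (z.drop l))

def hasSq : List ℕ → Bool
  | [] => false
  | z@(_ :: t) => anySq z || hasSq t

def allW : ℕ → List (List ℕ)
  | 0 => [[]]
  | n+1 => (allW n).flatMap (fun u => [0::u, 1::u, 2::u])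

lemma imgH_len (c : ℕ) : (imgH c).length = 11 := by
  by_cases h0 : c = 0 <;> by_cases h1 : c = 1 <;> simp [imgH, h0, h1]

lemma imgH_mem {x c : ℕ} (h : x ∈ imgH c) : x ≤ 2 := by
  by_cases h0 : c = 0 <;> by_cases h1 : c = 1 <;> simp [imgH, h0, h1] at h <;> omega

lemma hMcons (a : ℕ) (v : List ℕ) : hM (a :: v) = imgH a ++ hM v := by simp [hM]

lemma hMlen (v : List ℕ) : (hM v).length = 11 * v.length := by
  induction v with
  | nil => simp [hM]
  | cons a v ih => rw [hMcons]; simp [ih, imgH_len]; ring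

lemma hMmem {x : ℕ} {v : List ℕ} (hv : ∀ y ∈ v, y ≤ 2) (h : x ∈ hM v) : x ≤ 2 := by
  simp only [hM, List.mem_flatMap] at h
  obtain ⟨a, _, hx⟩ := h
  exact imgH_mem hx

lemma hMget (v : List ℕ) : ∀ c e, c < v.length → e < 11 →
    (hM v).getD (11*c + e) 0 = (imgH (v.getD c 0)).getD e 0 := by
  induction v with
  | nil => intro c e hc; simp at hc
  | cons a v ih =>
    intro c e hc he
    cases c with
    | zero =>
      rw [hMcons, List.getD_append _ _ _ _ (by rw [imgH_len]; omega)]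
      simp
    | succ c' =>
      rw [hMcons, List.getD_append_right _ _ _ _ (by rw [imgH_len]; omega)]
      rw [show 11*(c'+1) + e - (imgH a).length = 11*c' + e from by rw [imgH_len]; omega]
      rw [ih c' e (by simp at hc; omega) he, List.getD_cons_succ]

-- decidable checks
lemma checkI : ∀ a < 3, ∀ b < 3,
    (∀ j < 11, (imgH b).getD j 0 = (imgH a).getD j 0) → a = b := by decide

set_option synthInstance.maxSize 2000 in
set_option synthInstance.maxHeartbeats 2000000 in
lemma checkS : ∀ a < 3, ∀ b < 3, ∀ c < 3, ∀ m < 12,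
    (∀ j < 11, (imgH b ++ imgH c).getD (m+j) 0 = (imgH a).getD j 0) →
    ((m = 0 ∧ a = b) ∨ (m = 11 ∧ a = c)) := by decide

set_option synthInstance.maxSize 2000 in
set_option synthInstance.maxHeartbeats 2000000 in
lemma checkT : ∀ r < 11, 1 ≤ r → ∀ A < 3, ∀ B < 3, ∀ C < 3,
    (∀ e < 11, r ≤ e → (imgH A).getD e 0 = (imgH B).getD e 0) →
    (∀ e < r, (imgH B).getD e 0 = (imgH C).getD e 0) → A = B ∨ B = C := by decide

set_option maxRecDepth 10000 in
lemma checkU : ∀ n < 6, ∀ v ∈ allW n, (hasSq v || !hasSq (hM v)) = true := by decide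

-- bridges
lemma pref_iff (u v : List ℕ) : pref u v = true ↔ u <+: v := by
  induction u generalizing v with
  | nil => simp [pref]
  | cons a as ih =>
    cases v with
    | nil => simp [pref]
    | cons b bs =>
      rw [pref]
      simp only [Bool.and_eq_true, beq_iff_eq, List.cons_prefix_cons, ih]

lemma hasSq_of_square {z : List ℕ} (h : ¬ SquareFree z) : hasSq z = true := by
  simp only [SquareFree, not_forall, not_not] at h
  obtain ⟨u, hne, s, t, hz⟩ := h
  induction s generalizing z with
  | nil =>
    subst hz
    simp only [List.nil_append]
    rw [hasSq.eq_def]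
    match hu : u, hne with
    | a :: u', _ =>
      simp only [List.cons_append, Bool.or_eq_true]
      left
      rw [anySq]
      apply List.any_eq_true.mpr
      refine ⟨(a :: u').length, ?_, ?_⟩
      · apply List.mem_range.mpr
        simp
        omega
      · simp only [Bool.and_eq_true, decide_eq_true_eq]
        constructor
        · simp
        · rw [show (a :: (u' ++ a :: u' ++ t) : List ℕ)
              = (a :: u') ++ ((a :: u') ++ t) from by simp]
          rw [List.take_left, List.drop_left]
          exact (pref_iff _ _).mpr ⟨t, rfl⟩
  | cons b s' ih =>
    subst hz
    rw [show ((b :: s') ++ (u ++ u) ++ t : List ℕ) = b :: (s' ++ (u ++ u) ++ t) from by simp]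
    rw [hasSq]
    simp only [Bool.or_eq_true]
    right
    exact ih rfl

lemma square_of_hasSq {z : List ℕ} (h : hasSq z = true) : ¬ SquareFree z := by
  induction z with
  | nil => simp [hasSq] at h
  | cons a t ih =>
    rw [hasSq] at h
    simp only [Bool.or_eq_true] at h
    rcases h with h | h
    · rw [anySq] at h
      obtain ⟨l, hl, hp⟩ := List.any_eq_true.mp h
      simp only [Bool.and_eq_true, decide_eq_true_eq] at hp
      obtain ⟨hl1, hp⟩ := hp
      have hpre := (pref_iff _ _).mp hp
      obtain ⟨rest, hrest⟩ := hpre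
      intro hsf
      apply hsf ((a :: t).take l) (by
        intro hcon
        have hlen := congrArg List.length hcon
        simp at hlen
        omega)
      refine ⟨[], rest, ?_⟩
      rw [List.nil_append, List.append_assoc, hrest]
      exact (List.take_append_drop l (a :: t))
    · have := ih h
      intro hsf
      apply this
      intro u hu hinf
      exact hsf u hu (hinf.trans ⟨[a], [], by simp⟩)

lemma hasSq_false_iff {z : List ℕ} : hasSq z = false ↔ SquareFree z := by
  constructor
  · intro h
    by_contra hc
    rw [hasSq_of_square hc] at h
    simp at h
  · intro h
    by_contra hc
    exact square_of_hasSq (by simpa using hc) h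

lemma mem_allW : ∀ (v : List ℕ), (∀ x ∈ v, x ≤ 2) → v ∈ allW v.length := by
  intro v
  induction v with
  | nil => intro _; simp [allW]
  | cons a v ih =>
    intro h
    have ha : a ≤ 2 := h a (by simp)
    have hv := ih (fun x hx => h x (by simp [hx]))
    show a :: v ∈ allW (v.length + 1)
    rw [allW]
    apply List.mem_flatMap.mpr
    refine ⟨v, hv, ?_⟩
    interval_cases a <;> simp

-- getD through append of two known blocks
lemma getD_two {A B C : List ℕ} {idx : ℕ} (h : idx < A.length + B.length) :
    (A ++ (B ++ C)).getD idx 0 = (A ++ B).getD idx 0 := by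
  rcases Nat.lt_or_ge idx A.length with h1 | h1
  · rw [List.getD_append _ _ _ _ h1, List.getD_append _ _ _ _ h1]
  · rw [List.getD_append_right _ _ _ _ h1, List.getD_append_right _ _ _ _ h1,
      List.getD_append _ _ _ _ (by omega)]

/-- synchronization -/
lemma syncH : ∀ (v : List ℕ), (∀ x ∈ v, x ≤ 2) → ∀ a m, a ≤ 2 →
    m + 11 ≤ (hM v).length →
    (∀ j < 11, (hM v).getD (m + j) 0 = (imgH a).getD j 0) →
    ∃ c, m = 11*c ∧ c < v.length ∧ v.getD c 0 = a := by
  intro v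
  induction v with
  | nil =>
    intro _ a m _ hlen _
    rw [hMlen] at hlen
    simp only [List.length_nil, Nat.mul_zero] at hlen
    omega
  | cons b v' ih =>
    intro hlet a m ha hlen hocc
    have hb : b ≤ 2 := hlet b (by simp)
    rcases Nat.eq_zero_or_pos m with rfl | hm
    · -- m = 0
      have heq : ∀ j < 11, (imgH b).getD j 0 = (imgH a).getD j 0 := by
        intro j hj
        have := hocc j hj
        rw [hMcons, List.getD_append _ _ _ _ (by rw [imgH_len]; omega)] at this
        simpa using this
      have := checkI a (by omega) b (by omega) heq
      exact ⟨0, by omega, by simp, by simp [this]⟩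
    · rcases Nat.lt_or_ge m 12 with hm12 | hm12
      · -- 1 ≤ m ≤ 11 : use checkS
        have hv' : v' ≠ [] := by
          intro hcon
          subst hcon
          rw [hMlen] at hlen
          simp at hlen
          omega
        obtain ⟨c0, v'', rfl⟩ : ∃ c0 v'', v' = c0 :: v'' := by
          rcases v' with _|⟨c0, v''⟩
          · simp at hv'
          · exact ⟨c0, v'', rfl⟩
        have hc0 : c0 ≤ 2 := hlet c0 (by simp)
        have hocc2 : ∀ j < 11, (imgH b ++ imgH c0).getD (m+j) 0 = (imgH a).getD j 0 := by
          intro j hj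
          have h5 := hocc j hj
          rw [hMcons, hMcons] at h5
          rw [getD_two (by simp [imgH_len]; omega)] at h5
          exact h5
        rcases checkS a (by omega) b (by omega) c0 (by omega) m (by omega) hocc2 with
          ⟨h1, h2⟩ | ⟨h1, h2⟩
        · omega
        · exact ⟨1, by omega, by simp, by simp [h2]⟩
      · -- m ≥ 12 : recurse
        have hocc' : ∀ j < 11, (hM v').getD (m - 11 + j) 0 = (imgH a).getD j 0 := by
          intro j hj
          have h5 := hocc j hj
          rw [hMcons, List.getD_append_right _ _ _ _ (by rw [imgH_len]; omega)] at h5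
          rw [show m + j - (imgH b).length = m - 11 + j from by rw [imgH_len]; omega] at h5
          exact h5
        have hlen' : (m - 11) + 11 ≤ (hM v').length := by
          rw [hMcons] at hlen
          simp only [List.length_append, imgH_len] at hlen
          omega
        obtain ⟨c, hc1, hc2, hc3⟩ := ih (fun x hx => hlet x (by simp [hx])) a (m - 11)
          ha hlen' hocc'
        exact ⟨c + 1, by omega, by simp; omega, by simpa using hc3⟩

/-- The morphism preserves square-freeness. -/
theorem hM_sqf : ∀ (v : List ℕ), (∀ x ∈ v, x ≤ 2) → SquareFree v → SquareFree (hM v) := by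
  intro v hlet hsf
  by_contra hcon
  obtain ⟨i, l, hl1, hbound, heq⟩ := square_pos hcon
  rw [hMlen] at hbound
  have hvlet : ∀ c, c < v.length → v.getD c 0 ≤ 2 := by
    intro c hc
    have : v.getD c 0 ∈ v := by
      rw [List.getD_eq_getElem _ _ hc]; exact List.getElem_mem _
    exact hlet _ this
  rcases Nat.lt_or_ge l 21 with hsmall | hlarge
  · -- small squares: land inside the image of a ≤ 5-letter factor
    set c0 := i / 11 with hc0
    set c1 := (i + 2*l - 1) / 11 with hc1
    have hc01 : c0 ≤ c1 := by
      apply Nat.div_le_div_right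
      omega
    have hc1v : c1 < v.length := by omega
    have hc14 : c1 ≤ c0 + 4 := by omega
    set v' := (v.drop c0).take (c1 - c0 + 1) with hv'
    have hv'len : v'.length = c1 - c0 + 1 := by
      simp [hv']
      omega
    have hv'get : ∀ c, c < v'.length → v'.getD c 0 = v.getD (c0 + c) 0 := by
      intro c hc
      rw [hv'len] at hc
      rw [List.getD_eq_getElem _ _ (by rw [hv'len]; omega),
        List.getD_eq_getElem _ _ (by omega)]
      simp only [hv', List.getElem_take, List.getElem_drop]
    have hv'inf : v' <:+: v :=
      ((v.drop c0).take_prefix _).isInfix.trans (v.drop_suffix c0).isInfix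
    have hv'sqf : SquareFree v' := by
      intro u hu hinf
      exact hsf u hu (hinf.trans hv'inf)
    have hv'let : ∀ x ∈ v', x ≤ 2 := fun x hx => hlet x (hv'inf.subset hx)
    -- hM v' getD relation
    have hrel : ∀ idx, idx < 11 * v'.length →
        (hM v').getD idx 0 = (hM v).getD (11*c0 + idx) 0 := by
      intro idx hidx
      obtain ⟨c, e, he, hce⟩ : ∃ c e, e < 11 ∧ idx = 11*c + e :=
        ⟨idx/11, idx%11, by omega, by omega⟩
      subst hce
      have hcv' : c < v'.length := by omega
      rw [hMget v' c e hcv' he, hv'get c hcv',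
        show 11*c0 + (11*c+e) = 11*(c0+c) + e from by ring,
        hMget v (c0+c) e (by omega) he]
    -- square inside hM v'
    have hsq' : ¬ SquareFree (hM v') := by
      apply pos_square (i := i - 11*c0) (δ := l) hl1
      · rw [hMlen, hv'len]
        omega
      · intro x hx
        rw [hrel _ (by rw [hv'len]; omega), hrel _ (by rw [hv'len]; omega)]
        rw [show 11*c0 + (i - 11*c0 + x) = i + x from by omega,
          show 11*c0 + (i - 11*c0 + l + x) = i + l + x from by omega]
        exact heq x hx
    -- contradict checkU
    have hU := checkU v'.length (by omega) v' (by rw [← hv'len] at *; exact mem_allW v' hv'let)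
    rw [(hasSq_false_iff).mpr hv'sqf] at hU
    simp only [Bool.false_or, Bool.not_eq_true'] at hU
    exact hsq' (hasSq_false_iff.mp hU)
  · -- large squares: synchronize
    set b := (i + 10) / 11 with hb
    have hb1 : i ≤ 11*b := by omega
    have hb2 : 11*b + 11 ≤ i + l := by omega
    have hbv : b < v.length := by omega
    have hocc : ∀ j < 11, (hM v).getD (11*b + l + j) 0 = (imgH (v.getD b 0)).getD j 0 := by
      intro j hj
      have hx := heq (11*b - i + j) (by omega)
      rw [show i + (11*b - i + j) = 11*b + j from by omega,
        show i + l + (11*b - i + j) = 11*b + l + j from by omega] at hx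
      rw [← hx, hMget v b j hbv hj]
    obtain ⟨c2, hc2, hc2v, -⟩ := syncH v hlet (v.getD b 0) (11*b + l)
      (hvlet b hbv) (by rw [hMlen]; omega) hocc
    have hdvd : 11 ∣ l := by
      have : 11 ∣ 11*b + l := ⟨c2, by omega⟩
      omega
    obtain ⟨δ, hδ⟩ := hdvd
    have hδ1 : 1 ≤ δ := by omega
    have hfull : ∀ c, i ≤ 11*c → 11*c + 11 ≤ i + l → v.getD c 0 = v.getD (c + δ) 0 := by
      intro c hcl hcu
      have hcv : c < v.length := by omega
      have hcdv : c + δ < v.length := by omega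
      have hb1' := hvlet c hcv
      have hb2' := hvlet (c+δ) hcdv
      apply checkI _ (by omega) _ (by omega)
      intro j hj
      have hx := heq (11*c - i + j) (by omega)
      rw [show i + (11*c - i + j) = 11*c + j from by omega,
        show i + l + (11*c - i + j) = 11*(c+δ) + j from by omega] at hx
      rw [hMget v c j hcv hj, hMget v (c+δ) j hcdv hj] at hx
      exact hx.symm
    set c0 := i / 11 with hc0
    set r := i % 11 with hr
    rcases Nat.eq_zero_or_pos r with hr0 | hr0
    · -- aligned
      apply pos_square (i := c0) (δ := δ) hδ1 (by omega) ?_ hsf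
      intro e he
      rw [show c0 + δ + e = (c0 + e) + δ from by omega]
      exact hfull (c0 + e) (by omega) (by omega)
    · -- unaligned: triple condition
      have hc0v : c0 < v.length := by omega
      have hc1v : c0 + δ < v.length := by omega
      have hc2v' : c0 + 2*δ < v.length := by omega
      have hsuf : ∀ e < 11, r ≤ e →
          (imgH (v.getD c0 0)).getD e 0 = (imgH (v.getD (c0+δ) 0)).getD e 0 := by
        intro e he hre
        have hx := heq (e - r) (by omega)
        rw [show i + (e - r) = 11*c0 + e from by omega,
          show i + l + (e - r) = 11*(c0+δ) + e from by omega] at hx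
        rw [hMget v c0 e hc0v he, hMget v (c0+δ) e hc1v he] at hx
        exact hx
      have hprefix : ∀ e < r,
          (imgH (v.getD (c0+δ) 0)).getD e 0 = (imgH (v.getD (c0+2*δ) 0)).getD e 0 := by
        intro e he
        have hx := heq (11*δ + e - r) (by omega)
        rw [show i + (11*δ + e - r) = 11*(c0+δ) + e from by omega,
          show i + l + (11*δ + e - r) = 11*(c0+2*δ) + e from by omega] at hx
        rw [hMget v (c0+δ) e hc1v (by omega), hMget v (c0+2*δ) e hc2v' (by omega)] at hx
        exact hx
      have hbA := hvlet c0 hc0v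
      have hbB := hvlet _ hc1v
      have hbC := hvlet _ hc2v'
      rcases checkT r (by omega) (by omega) (v.getD c0 0) (by omega)
        (v.getD (c0+δ) 0) (by omega) (v.getD (c0+2*δ) 0) (by omega)
        hsuf hprefix with hAB | hBC
      · apply pos_square (i := c0) (δ := δ) hδ1 (by omega) ?_ hsf
        intro e he
        rcases Nat.eq_zero_or_pos e with rfl | he1
        · rw [Nat.add_zero, show c0 + δ + 0 = c0 + δ from by omega]
          exact hAB
        · rw [show c0 + δ + e = (c0 + e) + δ from by omega]
          exact hfull (c0 + e) (by omega) (by omega)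
      · apply pos_square (i := c0+1) (δ := δ) hδ1 (by omega) ?_ hsf
        intro e he
        rcases Nat.lt_or_ge e (δ - 1) with he1 | he1
        · rw [show c0 + 1 + δ + e = (c0 + 1 + e) + δ from by omega]
          exact hfull (c0 + 1 + e) (by omega) (by omega)
        · have he2 : e = δ - 1 := by omega
          subst he2
          rw [show c0 + 1 + (δ-1) = c0 + δ from by omega,
            show c0 + 1 + δ + (δ-1) = c0 + 2*δ from by omega]
          exact hBC



def thueW : ℕ → List ℕ
  | 0 => [0]
  | n+1 => hM (thueW n)

lemma thueW_letters : ∀ n, ∀ x ∈ thueW n, x ≤ 2 := by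
  intro n
  induction n with
  | zero => intro x hx; simp [thueW] at hx; omega
  | succ n ih => intro x hx; exact hMmem ih hx

lemma thueW_sqf : ∀ n, SquareFree (thueW n) := by
  intro n
  induction n with
  | zero =>
    intro u hu hinf
    have h1 := List.length_pos_iff.mpr hu
    have h2 := hinf.length_le
    simp [thueW] at h2
    omega
  | succ n ih => exact hM_sqf (thueW n) (thueW_letters n) ih

lemma thueW_len : ∀ n, (thueW n).length = 11^n := by
  intro n
  induction n with
  | zero => simp [thueW]
  | succ n ih => rw [thueW, hMlen, ih, pow_succ]; ring

lemma flatten_map {α β : Type*} (f : α → β) :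
    ∀ (Ys : List (List α)), (Ys.map (List.map f)).flatten = Ys.flatten.map f := by
  intro Ys
  induction Ys with
  | nil => simp
  | cons a as ih => rw [List.map_cons, List.flatten_cons, List.flatten_cons, List.map_append, ih]

lemma encounters_map {α β : Type*} (f : α → β) (m : ℕ) (w : List α)
    (h : Encounters m w) : Encounters m (w.map f) := by
  obtain ⟨X, Ys, h1, h2, h3, h4, h5⟩ := h
  refine ⟨X.map f, Ys.map (List.map f), by simp [h1], by simpa using h2, ?_, ?_, ?_⟩
  · intro Y hY
    simp only [List.mem_map] at hY
    obtain ⟨Y', hY', rfl⟩ := hY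
    simpa using h3 Y' hY'
  · have h6 := h4.map f
    simp only [List.map_append] at h6
    rw [flatten_map]
    exact h6
  · intro Y hY
    simp only [List.mem_map] at hY
    obtain ⟨Y', hY', rfl⟩ := hY
    rw [← List.map_reverse]
    exact (h5 Y' hY').map f

def toF6 : ℕ → Fin 6 := fun x => ⟨x % 6, Nat.mod_lt _ (by omega)⟩

lemma avoids_map {m : ℕ} {uu : List ℕ} (hle : ∀ x ∈ uu, x ≤ 5) (hav : Avoids m uu) :
    Avoids m (uu.map toF6) := by
  intro hEnc
  apply hav
  have h := encounters_map Fin.val m _ hEnc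
  rw [List.map_map] at h
  have e : uu.map (Fin.val ∘ toF6) = uu := by
    have e1 : uu.map (Fin.val ∘ toF6) = uu.map id := by
      apply List.map_congr_left
      intro x hx
      have := hle x hx
      show x % 6 = x
      omega
    rw [e1, List.map_id]
  rwa [e] at h

theorem phi_final (k : ℕ) (hk : 1 ≤ k) :
    (∀ w : List ℕ, (∀ c ∈ w, c ≤ 2) → SquareFree w →
      Avoids (3 * k + 1) (insertEvery 5 (3 * k) (gMorph (dMorph k w)))) ∧
    {w : List (Fin 6) | Avoids (3 * k + 1) w}.Infinite := by
  constructor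
  · intro w hw hsf
    exact part1 k hk w hw hsf
  · set F : ℕ → List (Fin 6) :=
      fun n => (insertEvery 5 (3*k) (gMorph (dMorph k (thueW n)))).map toF6 with hF
    have hlen : ∀ n, (gMorph (dMorph k (thueW n))).length = 3*((k+1)*11^n) := by
      intro n
      rw [glen, dlen, thueW_len]
    have hFlen : ∀ n, (F n).length = (insertEvery 5 (3*k) (gMorph (dMorph k (thueW n)))).length := by
      intro n
      simp [hF]
    have hmono : StrictMono fun n => (F n).length := by
      apply strictMono_nat_of_lt_succ
      intro n
      rw [hFlen, hFlen]
      have h1 := insertEvery_len_le 5 (3*k) _ (gMorph (dMorph k (thueW n))) le_rfl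
      have h2 := insertEvery_len_ge 5 (3*k) _ (gMorph (dMorph k (thueW (n+1)))) le_rfl
      rw [hlen] at h1 h2
      have e : (k+1)*11^(n+1) = 11*((k+1)*11^n) := by ring
      have hM1 : 1 ≤ (k+1)*11^n := by
        have := pow_pos (show 0 < (11:ℕ) by omega) n
        have := Nat.mul_le_mul (show 1 ≤ k+1 by omega) this
        omega
      omega
    have hinj : Function.Injective F := fun m n hmn =>
      hmono.injective (congrArg List.length hmn)
    apply Set.infinite_of_injective_forall_mem (f := F) hinj
    intro n
    show Avoids (3*k+1) (F n)
    apply avoids_map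
    · intro x hx
      rcases insertEvery_mem _ _ le_rfl hx with rfl | hx2
      · omega
      · rcases gmem hx2 with h3 | h3 | h3
        · have := thueW_letters n x (dmem h3)
          omega
        · omega
        · omega
    · exact part1 k hk (thueW n) (thueW_letters n) (thueW_sqf n)

end Str14

/-- For `k ≥ 1`: if `w ∈ {0,1,2}*` is square-free then the word `u_w`,
obtained from `g(d_k(w))` by inserting the new letter `c` (coded `5`) after every `3k`
letters, avoids `φ_{3k+1}`; consequently `φ_{3k+1}` is 6-avoidable. -/
theorem phi_threeKplusOne_six_avoidable (k : ℕ) (hk : 1 ≤ k) :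
    (∀ w : List ℕ, (∀ c ∈ w, c ≤ 2) → SquareFree w →
      Avoids (3 * k + 1) (insertEvery 5 (3 * k) (gMorph (dMorph k w)))) ∧
    {w : List (Fin 6) | Avoids (3 * k + 1) w}.Infinite :=
  Str14.phi_final k hk
end

section
/- For all integers k ≥ 1 and n ≥ 1 and every infinite word w over the alphabet {1,…,n} (viewed as positive integers), the 3-cyclic w-word C₃(w) encounters the formula with reversal φ_k. -/
section CyclicAux

variable {A : Type*}

def cycBlk (w : ℕ → ℕ) (a : ℕ → A) (i : ℕ) : List A :=
  List.replicate (w i) (a (i % 3))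

def cycF (w : ℕ → ℕ) (a : ℕ → A) (s m : ℕ) : List A :=
  ((List.range' s m).map (cycBlk w a)).flatten

lemma cycF_succ (w : ℕ → ℕ) (a : ℕ → A) (s m : ℕ) :
    cycF w a s (m + 1) = cycBlk w a s ++ cycF w a (s + 1) m := by
  simp [cycF, List.range'_succ]

lemma cycF_one (w : ℕ → ℕ) (a : ℕ → A) (s : ℕ) :
    cycF w a s 1 = List.replicate (w s) (a (s % 3)) := by
  simp [cycF, List.range'_succ, cycBlk]

lemma cycF_two (w : ℕ → ℕ) (a : ℕ → A) (s : ℕ) :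
    cycF w a s 2 = List.replicate (w s) (a (s % 3))
      ++ List.replicate (w (s+1)) (a ((s+1) % 3)) := by
  rw [show (2:ℕ) = 1 + 1 from rfl, cycF_succ w a s 1, cycF_one]
  rfl

lemma cycF_append (w : ℕ → ℕ) (a : ℕ → A) (s m n : ℕ) :
    cycF w a s (m + n) = cycF w a s m ++ cycF w a (s + m) n := by
  have h : List.range' s (m + n) = List.range' s m ++ List.range' (s + m) n := by
    rw [List.range'_append_1, Nat.add_comm]
  rw [cycF, h, List.map_append, List.flatten_append]
  rfl

lemma cyclicWordFrom_eq (w : ℕ → ℕ) (a : ℕ → A) :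
    ∀ m s, cyclicWordFrom 3 a s ((List.range' s m).map w) = cycF w a s m := by
  intro m
  induction m with
  | zero => intro s; rfl
  | succ m ih =>
    intro s
    rw [List.range'_succ, List.map_cons]
    show List.replicate (w s) (a (s % 3)) ++ cyclicWordFrom 3 a (s+1) _ = _
    rw [ih (s+1), cycF_succ]
    rfl

lemma encounters_mk (k : ℕ) (u P S X : List A) (Ys : List (List A))
    (hu : u = P ++ (X ++ Ys.flatten ++ X) ++ S)
    (hX : X ≠ []) (hlen : Ys.length = k)
    (hY : ∀ Y ∈ Ys, ∃ m x, m ≠ 0 ∧ Y = List.replicate m x) :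
    Encounters k u := by
  refine ⟨X, Ys, hlen, hX, ?_, ⟨P, S, ?_⟩, ?_⟩
  · intro Y hm
    obtain ⟨m, x, hm0, rfl⟩ := hY Y hm
    cases m with
    | zero => exact absurd rfl hm0
    | succ m => simp
  · rw [hu]
  · intro Y hm
    obtain ⟨m, x, hm0, rfl⟩ := hY Y hm
    rw [List.reverse_replicate]
    refine (List.infix_of_mem_flatten hm).trans ⟨P ++ X, X ++ S, ?_⟩
    rw [hu]; simp only [List.append_assoc]

lemma span_aux (b : ℕ → ℕ) (n : ℕ) (hlb : ∀ i, 1 ≤ b i) (hub : ∀ i, b i ≤ n)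
    (δ : ℕ) :
    ∃ c, b (c + δ) ≤ b c ∧ b (c + 1) ≤ b (c + δ + 1) := by
  by_contra hcon
  push_neg at hcon
  by_cases hD : ∃ x, b (x + δ) < b x
  · obtain ⟨x, hx⟩ := hD
    have prop : ∀ j, b (x + j + δ) < b (x + j) := by
      intro j
      induction j with
      | zero => simpa using hx
      | succ j ih =>
        have h2 := hcon (x + j) (le_of_lt ih)
        have e1 : x + (j + 1) + δ = x + j + δ + 1 := by omega
        have e2 : x + (j + 1) = x + j + 1 := by omega
        rw [e1, e2]; exact h2
    have dec : ∀ j, b (x + j * δ) + j ≤ b x := by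
      intro j
      induction j with
      | zero => simp
      | succ j ih =>
        have h2 := prop (j * δ)
        have e : x + (j + 1) * δ = x + j * δ + δ := by ring
        rw [e]; omega
    have h3 := dec (b x)
    have h4 := hlb (x + b x * δ)
    omega
  · push_neg at hD
    have inc : ∀ c, b c < b (c + δ) := by
      intro c
      rcases Nat.lt_or_ge (b c) (b (c + δ)) with h | h
      · exact h
      · exfalso
        have h2 := hcon c h
        have h3 := hD (c + 1)
        have e : c + 1 + δ = c + δ + 1 := by omega
        rw [e] at h3
        omega
    have grow : ∀ j, b 0 + j ≤ b (j * δ) := by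
      intro j
      induction j with
      | zero => simp
      | succ j ih =>
        have h2 := inc (j * δ)
        have e : (j + 1) * δ = j * δ + δ := by ring
        rw [e]; omega
    have h5 := grow (n + 1)
    have h6 := hub ((n + 1) * δ)
    have h7 := hlb 0
    omega

lemma repl_split (m p : ℕ) (x : A) (h : p ≤ m) :
    List.replicate m x = List.replicate (m - p) x ++ List.replicate p x := by
  rw [← List.replicate_add]; congr 1; omega

end CyclicAux


/-- For all `k, n ≥ 1` and every infinite word `w` over `{1,…,n}`, the
3-cyclic `w`-word `C₃(w)` (on distinct letters `a 0, a 1, a 2`) encounters `φ_k`; i.e.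
some finite prefix of `C₃(w)` encounters `φ_k`. -/
theorem cyclicThree_encounters {A : Type*} (k n : ℕ) (hk : 1 ≤ k) (hn : 1 ≤ n)
    (a : ℕ → A) (ha : Set.InjOn a (Set.Iio 3))
    (w : ℕ → ℕ) (hw : ∀ i, 1 ≤ w i ∧ w i ≤ n) :
    ∃ N, Encounters k (cyclicWord 3 a ((List.range N).map w)) := by
  classical
  have hw1 : ∀ i, 1 ≤ w i := fun i => (hw i).1
  have hcw : ∀ N : ℕ, cyclicWord 3 a ((List.range N).map w) = cycF w a 0 N := by
    intro N
    rw [List.range_eq_range']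
    exact cyclicWordFrom_eq w a N 0
  have hYblocks : ∀ (s m : ℕ), ∀ Y ∈ (List.range' s m).map (cycBlk w a),
      ∃ mm x, mm ≠ 0 ∧ Y = List.replicate mm x := by
    intro s m Y hY
    obtain ⟨i, _, rfl⟩ := List.mem_map.1 hY
    exact ⟨w i, a (i % 3), by have := hw1 i; omega, rfl⟩
  have h3 : k % 3 = 0 ∨ k % 3 = 1 ∨ k % 3 = 2 := by omega
  rcases h3 with h3 | h3 | h3
  · -- k ≡ 0 (mod 3), k ≥ 3
    by_cases hbig : ∃ c, 2 ≤ w c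
    · obtain ⟨c, hc⟩ := hbig
      obtain ⟨m, hm⟩ : ∃ m, k = m + 1 := ⟨k - 1, by omega⟩
      refine ⟨c + k + 1, ?_⟩
      rw [hcw]
      set x := a (c % 3) with hxdef
      refine encounters_mk k _ (cycF w a 0 c ++ List.replicate (w c - 2) x)
        (List.replicate (w (c + k) - 1) x) (List.replicate 1 x)
        (List.replicate 1 x :: (List.range' (c+1) m).map (cycBlk w a)) ?_ (by simp) ?_ ?_
      · show cycF w a 0 (c + k + 1)
          = _ ++ (_ ++ (List.replicate 1 x ++ cycF w a (c+1) m) ++ _) ++ _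
        rw [show c + k + 1 = c + (1 + (m + 1)) by omega, cycF_append w a 0 c,
          Nat.zero_add, cycF_append w a c 1 (m+1), cycF_append w a (c+1) m 1,
          cycF_one, cycF_one]
        have e1 : (c + 1 + m) % 3 = c % 3 := by omega
        have e2 : c + 1 + m = c + k := by omega
        rw [e1, e2, ← hxdef]
        rw [repl_split (w c) 2 x (by omega), repl_split (w (c+k)) (w (c+k) - 1) x (by omega),
          show w (c+k) - (w (c+k) - 1) = 1 by have := hw1 (c+k); omega,
          show (2:ℕ) = 1 + 1 from rfl, List.replicate_add]
        simp only [List.append_assoc]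
      · simp [hm]
      · intro Y hY
        rcases List.mem_cons.1 hY with h | h
        · exact ⟨1, x, by omega, h⟩
        · exact hYblocks (c+1) m Y h
    · push_neg at hbig
      have hone : ∀ c, w c = 1 := fun c => by have := hw1 c; have := hbig c; omega
      refine ⟨k + 6, ?_⟩
      rw [hcw]
      refine encounters_mk k _ [] [] (cycF w a 0 3)
        ((List.range' 3 k).map (cycBlk w a)) ?_ ?_ (by simp) (hYblocks 3 k)
      · show cycF w a 0 (k + 6) = [] ++ (cycF w a 0 3 ++ cycF w a 3 k ++ cycF w a 0 3) ++ []
        rw [show k + 6 = 3 + (k + 3) by omega, cycF_append w a 0 3, Nat.zero_add,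
          cycF_append w a 3 k 3]
        have hX3 : ∀ s, s % 3 = 0 → cycF w a s 3 = cycF w a 0 3 := by
          intro s hs
          rw [show (3:ℕ) = 1 + (1 + 1) from rfl, cycF_append w a s 1, cycF_append w a (s+1) 1 1,
            cycF_append w a 0 1, cycF_append w a 1 1 1, cycF_one, cycF_one, cycF_one,
            cycF_one, cycF_one, cycF_one, hone, hone, hone, hone, hone, hone,
            hs, show (s+1) % 3 = 1 % 3 by omega, show (s+1+1) % 3 = (1+1) % 3 by omega]
        rw [hX3 (3 + k) (by omega)]
        simp
      · have h0 : (0:ℕ) % 3 = 0 := rfl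
        rw [show (3:ℕ) = 1 + 2 from rfl, cycF_append w a 0 1, cycF_one, hone]
        simp
  · -- k ≡ 1 (mod 3): use the span lemma with δ = k + 2
    obtain ⟨c, hc1, hc2⟩ := span_aux w n hw1 (fun i => (hw i).2) (k + 2)
    refine ⟨c + k + 4, ?_⟩
    rw [hcw]
    set x := a (c % 3) with hxdef
    set y := a ((c + 1) % 3) with hydef
    set p := w (c + (k + 2)) with hpdef
    set q := w (c + 1) with hqdef
    refine encounters_mk k _ (cycF w a 0 c ++ List.replicate (w c - p) x)
      (List.replicate (w (c + (k + 2) + 1) - q) y)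
      (List.replicate p x ++ List.replicate q y)
      ((List.range' (c+2) k).map (cycBlk w a)) ?_ ?_ (by simp) (hYblocks (c+2) k)
    · show cycF w a 0 (c + k + 4)
        = _ ++ ((List.replicate p x ++ List.replicate q y) ++ cycF w a (c+2) k
            ++ (List.replicate p x ++ List.replicate q y)) ++ _
      rw [show c + k + 4 = c + (2 + (k + 2)) by omega, cycF_append w a 0 c,
        Nat.zero_add, cycF_append w a c 2 (k+2), cycF_append w a (c+2) k 2,
        cycF_two, cycF_two]
      have e1 : (c + 2 + k) % 3 = c % 3 := by omega
      have e2 : (c + 2 + k + 1) % 3 = (c + 1) % 3 := by omega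
      have e3 : c + 2 + k = c + (k + 2) := by omega
      have e4 : c + 2 + k + 1 = c + (k + 2) + 1 := by omega
      rw [e1, e2, e3, ← hxdef, ← hydef, ← hpdef, ← hqdef]
      rw [repl_split (w c) p x hc1]
      rw [repl_split (w (c + (k+2) + 1)) (w (c + (k+2) + 1) - q) y (by omega),
        show w (c + (k+2) + 1) - (w (c + (k+2) + 1) - q) = q by
          have h := hc2; omega]
      simp only [List.append_assoc]
    · intro hcon
      have : p + q = 0 := by
        have := congrArg List.length hcon
        simpa using this
      have := hw1 (c + (k + 2))
      omega
  · -- k ≡ 2 (mod 3)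
    refine ⟨k + 2, ?_⟩
    rw [hcw]
    set x := a (0 % 3) with hxdef
    refine encounters_mk k _ (List.replicate (w 0 - 1) x)
      (List.replicate (w (1 + k) - 1) x) (List.replicate 1 x)
      ((List.range' 1 k).map (cycBlk w a)) ?_ (by simp) (by simp) (hYblocks 1 k)
    · show cycF w a 0 (k + 2)
        = _ ++ (List.replicate 1 x ++ cycF w a 1 k ++ List.replicate 1 x) ++ _
      rw [show k + 2 = 1 + (k + 1) by omega, cycF_append w a 0 1, Nat.zero_add,
        cycF_append w a 1 k 1, cycF_one, cycF_one]
      have e1 : (1 + k) % 3 = 0 % 3 := by omega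
      rw [e1, ← hxdef]
      rw [repl_split (w 0) 1 x (hw1 0),
        repl_split (w (1 + k)) (w (1 + k) - 1) x (by omega),
        show w (1 + k) - (w (1 + k) - 1) = 1 by have := hw1 (1 + k); omega]
      simp only [List.append_assoc]
end
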